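/- For every r ∈ (0, 1/2), the supremum over all Borel probability measures μ on S¹ of ∫_{S¹} μ(I_r(x)) dμ(x) equals 1/2; in particular, ∫_{S¹} μ(I_r(x)) dμ(x) ≤ 1/2 for every μ, with equality when μ = (1/2)(δ_p + δ_{−p}) for any p ∈ S¹. -/

import Mathlib

/-! The relation `y ∈ I_r(x)` reads `⟪x, y⟫ ≤ 2r² - 1`, since the point of `aff(x, y)` nearest
to the origin is the midpoint of `x` and `y`, of squared norm `(1 + ⟪x, y⟫) / 2`. For `r < 1/2`
the threshold is below `-1/2`, and three unit vectors cannot have pairwise inner products below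
`-1/2` because `‖x + y + z‖² ≥ 0`: the relation is a triangle-free graph. Writing
`f x = μ(I_r(x))`, adjacent vertices have disjoint neighbourhoods, so `f x + f y ≤ 1` along edges;
integrating over the edges and using symmetry gives `2 ∫ f² ≤ ∫ f`, and with `f ≤ f² + 1/4` this
forces `∫ f ≤ 1/2`. An antipodal pair is an edge, which gives equality. -/

open MeasureTheory Real
open scoped ENNReal

noncomputable section

/-- The Euclidean plane `ℝ²`. -/
abbrev Plane : Type := EuclideanSpace ℝ (Fin 2)

/-- The unit circle `S¹ ⊆ ℝ²`. -/
def unitCircle : Set Plane := Metric.sphere 0 1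

/- The line through `x` and `y` if `x ≠ y`; the tangent line to the unit circle at `x`
if `x = y` (for `x` on the unit circle, the tangent line is `{p | ⟪p, x⟫ = 1}`). -/
open Classical in
def chordLine (x y : Plane) : Set Plane :=
  if x = y then {p : Plane | inner ℝ p x = (1 : ℝ)}
  else (affineSpan ℝ ({x, y} : Set Plane) : Set Plane)

/-- `P_μ(ℓ < r)`: the `μ⊗μ⊗μ⊗μ`-measure of the set of quadruples `(x₁,x₂,x₃,x₄)` in `(S¹)⁴`
such that some point `p` with `‖p‖ < r` lies on both `aff(x₁,x₂)` and `aff(x₃,x₄)`. -/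
def probLT (μ : Measure unitCircle) (r : ℝ) : ℝ≥0∞ :=
  (μ.prod (μ.prod (μ.prod μ)))
    {q : unitCircle × unitCircle × unitCircle × unitCircle |
      ∃ p : Plane, ‖p‖ < r ∧ p ∈ chordLine (q.1 : Plane) (q.2.1 : Plane) ∧
        p ∈ chordLine (q.2.2.1 : Plane) (q.2.2.2 : Plane)}

/-- The set of quadruples `(x₁,x₂,x₃,x₄) ∈ (S¹)⁴` for which some point `p` with `‖p‖ ≤ r`
lies on both `aff(x₁,x₂)` and `aff(x₃,x₄)`. -/
def quadSetLE (r : ℝ) : Set (unitCircle × unitCircle × unitCircle × unitCircle) :=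
  {q | ∃ p : Plane, ‖p‖ ≤ r ∧ p ∈ chordLine (q.1 : Plane) (q.2.1 : Plane) ∧
    p ∈ chordLine (q.2.2.1 : Plane) (q.2.2.2 : Plane)}

/-- `P_μ(ℓ ≤ r)`: the `μ⊗μ⊗μ⊗μ`-measure of `quadSetLE r`. -/
def probLE (μ : Measure unitCircle) (r : ℝ) : ℝ≥0∞ :=
  (μ.prod (μ.prod (μ.prod μ))) (quadSetLE r)

/-- `I_r(x)`: the set of `y ∈ S¹` such that the line `aff(x,y)` meets the closed disk of
radius `r` centred at the origin. -/
def arcSet (r : ℝ) (x : unitCircle) : Set unitCircle :=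
  {y | ∃ p : Plane, ‖p‖ ≤ r ∧ p ∈ chordLine (x : Plane) (y : Plane)}

open AffineMap
open scoped RealInnerProductSpace

lemma ENNReal.le_mul_self_add_inv_four (a : ℝ≥0∞) : a ≤ a * a + 4⁻¹ := by
  rcases eq_or_ne a ⊤ with rfl | ha
  · simp
  rw [← ENNReal.toReal_le_toReal ha (by finiteness), ENNReal.toReal_add (by finiteness) (by simp),
    ENNReal.toReal_mul, ENNReal.toReal_inv]
  norm_num
  nlinarith [sq_nonneg (a.toReal - 1 / 2)]

section TriangleFree

variable {α : Type*} [MeasurableSpace α] {R : α → α → Prop}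

lemma lintegral_setLIntegral_setOf_of_symmetric {μ : Measure α} [SFinite μ]
    (hR : MeasurableSet {p : α × α | R p.1 p.2}) (hsymm : ∀ x y, R x y → R y x) {g : α → ℝ≥0∞}
    (hg : Measurable g) :
    ∫⁻ x, ∫⁻ y in {y | R x y}, g y ∂μ ∂μ = ∫⁻ x, μ {y | R x y} * g x ∂μ := by
  have hsec : ∀ x, MeasurableSet {y | R x y} := fun x ↦ measurable_prodMk_left hR
  set E := {p : α × α | R p.1 p.2}
  have hsection : ∀ x, ∫⁻ y in {y | R x y}, g y ∂μ = ∫⁻ y, E.indicator (g ∘ Prod.snd) (x, y) ∂μ :=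
    fun x ↦ (lintegral_indicator (hsec x) g).symm
  have hswap : ∀ x y, E.indicator (g ∘ Prod.snd) (x, y) = {x | R y x}.indicator (fun _ ↦ g y) x :=
    fun x y ↦ by
      by_cases h : R x y
      · simp [E, Set.indicator, h, hsymm x y h]
      · simp [E, Set.indicator, h, mt (hsymm y x) h]
  calc ∫⁻ x, ∫⁻ y in {y | R x y}, g y ∂μ ∂μ
      = ∫⁻ x, ∫⁻ y, E.indicator (g ∘ Prod.snd) (x, y) ∂μ ∂μ := lintegral_congr hsection
    _ = ∫⁻ y, ∫⁻ x, E.indicator (g ∘ Prod.snd) (x, y) ∂μ ∂μ :=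
      lintegral_lintegral_swap ((hg.comp measurable_snd).indicator hR).aemeasurable
    _ = ∫⁻ y, ∫⁻ x in {x | R y x}, g y ∂μ ∂μ := lintegral_congr fun y ↦ by
      rw [← lintegral_indicator (hsec y)]
      exact lintegral_congr fun x ↦ hswap x y
    _ = ∫⁻ x, μ {y | R x y} * g x ∂μ :=
      lintegral_congr fun y ↦ by rw [setLIntegral_const, mul_comm]

/-- A measure-theoretic Mantel theorem. -/
theorem lintegral_measure_setOf_le_half_of_triangleFree (μ : Measure α) [IsProbabilityMeasure μ]
    (hR : MeasurableSet {p : α × α | R p.1 p.2}) (hsymm : ∀ x y, R x y → R y x)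
    (htri : ∀ x y z, R x y → R y z → ¬R x z) :
    ∫⁻ x, μ {y | R x y} ∂μ ≤ 1 / 2 := by
  set f : α → ℝ≥0∞ := fun x ↦ μ {y | R x y}
  have hf : Measurable f := measurable_measure_prodMk_left hR
  have hedge : ∀ x y, R x y → f x + f y ≤ 1 := fun x y hxy ↦ by
    have hdisj : Disjoint {z | R x z} {z | R y z} :=
      Set.disjoint_left.2 fun z hxz hyz ↦ htri x y z hxy hyz hxz
    exact (measure_union hdisj (measurable_prodMk_left hR)).symm.trans_le prob_le_one
  have hpoint : ∀ x, f x * f x + ∫⁻ y in {y | R x y}, f y ∂μ ≤ f x := fun x ↦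
    calc f x * f x + ∫⁻ y in {y | R x y}, f y ∂μ
        = ∫⁻ y in {y | R x y}, (f x + f y) ∂μ := by
          rw [lintegral_add_left measurable_const, setLIntegral_const]
      _ ≤ ∫⁻ _ in {y | R x y}, 1 ∂μ := setLIntegral_mono measurable_const (hedge x)
      _ = f x := by rw [setLIntegral_const, one_mul]
  set A := ∫⁻ x, f x * f x ∂μ
  set t := ∫⁻ x, f x ∂μ
  have htwo : A + A ≤ t :=
    calc A + A = ∫⁻ x, (f x * f x + ∫⁻ y in {y | R x y}, f y ∂μ) ∂μ := by
          rw [lintegral_add_left (f := fun x ↦ f x * f x) (hf.mul hf),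
            lintegral_setLIntegral_setOf_of_symmetric hR hsymm hf]
      _ ≤ t := lintegral_mono hpoint
  have hamgm : t ≤ A + 4⁻¹ :=
    calc t ≤ ∫⁻ x, (f x * f x + 4⁻¹) ∂μ :=
          lintegral_mono fun x ↦ ENNReal.le_mul_self_add_inv_four (f x)
      _ = A + 4⁻¹ := by rw [lintegral_add_right _ measurable_const, lintegral_const,
          measure_univ, mul_one]
  have ht : t ≠ ∞ := by
    refine ne_top_of_le_ne_top ENNReal.one_ne_top ?_
    simpa using lintegral_mono (μ := μ) fun x ↦ (prob_le_one : f x ≤ 1)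
  have hA : A ≠ ∞ := ne_top_of_le_ne_top ht (le_add_self.trans htwo)
  rw [← ENNReal.toReal_le_toReal (by finiteness) (by finiteness), ENNReal.toReal_add hA hA]
    at htwo
  rw [← ENNReal.toReal_le_toReal (by finiteness) (by finiteness), ENNReal.toReal_add hA (by simp)]
    at hamgm
  rw [← ENNReal.toReal_le_toReal ht (by simp)]
  norm_num at hamgm ⊢
  linarith

end TriangleFree

section TwoPoint

variable {α : Type*} [MeasurableSpace α] [MeasurableSingletonClass α] {R : α → α → Prop}

lemma lintegral_measure_setOf_eq_half_of_adj {p q : α} (hpq : R p q) (hqp : R q p)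
    (hpp : ¬R p p) (hqq : ¬R q q) :
    ∫⁻ x, ((2⁻¹ : ℝ≥0∞) • Measure.dirac p + (2⁻¹ : ℝ≥0∞) • Measure.dirac q) {y | R x y}
      ∂((2⁻¹ : ℝ≥0∞) • Measure.dirac p + (2⁻¹ : ℝ≥0∞) • Measure.dirac q) = 1 / 2 := by
  rw [lintegral_add_measure, lintegral_smul_measure, lintegral_smul_measure, lintegral_dirac,
    lintegral_dirac]
  simp only [Measure.add_apply, Measure.smul_apply, Measure.dirac_apply, Set.indicator,
    Set.mem_ofPred_eq, hpq, hqp, hpp, hqq, if_true, if_false, Pi.one_apply, smul_eq_mul, mul_one,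
    mul_zero, zero_add, add_zero]
  rw [← mul_add, ENNReal.inv_two_add_inv_two, mul_one, one_div]

end TwoPoint

section UnitVectors

variable {E : Type*} [NormedAddCommGroup E] [InnerProductSpace ℝ E] {x y z : E}

lemma norm_lineMap_sq_of_norm_eq_one (hx : ‖x‖ = 1) (hy : ‖y‖ = 1) (t : ℝ) :
    ‖lineMap x y t‖ ^ 2 = (1 + ⟪x, y⟫) / 2 + (1 - ⟪x, y⟫) * (2 * t - 1) ^ 2 / 2 := by
  rw [lineMap_apply_module, norm_add_sq_real, norm_smul, norm_smul, real_inner_smul_left,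
    real_inner_smul_right, hx, hy, Real.norm_eq_abs, Real.norm_eq_abs, mul_pow, mul_pow, sq_abs,
    sq_abs]
  ring

lemma exists_norm_le_mem_affineSpan_pair_iff (hx : ‖x‖ = 1) (hy : ‖y‖ = 1) {r : ℝ}
    (hr : 0 ≤ r) : (∃ p, ‖p‖ ≤ r ∧ p ∈ line[ℝ, x, y]) ↔ ⟪x, y⟫ ≤ 2 * r ^ 2 - 1 := by
  have hxy : ⟪x, y⟫ ≤ 1 := by simpa [hx, hy] using real_inner_le_norm x y
  constructor
  · rintro ⟨p, hpr, hp⟩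
    obtain ⟨t, rfl⟩ := mem_affineSpan_pair_iff_exists_lineMap_eq.1 hp
    nlinarith [norm_lineMap_sq_of_norm_eq_one hx hy t, pow_le_pow_left₀ (norm_nonneg _) hpr 2,
      sq_nonneg (2 * t - 1)]
  · intro h
    refine ⟨lineMap x y (1 / 2 : ℝ), ?_, lineMap_mem_affineSpan_pair _ _ _⟩
    apply le_of_sq_le_sq _ hr
    nlinarith [norm_lineMap_sq_of_norm_eq_one hx hy (1 / 2)]

lemma neg_three_halves_le_inner_add_inner_add_inner (hx : ‖x‖ = 1) (hy : ‖y‖ = 1)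
    (hz : ‖z‖ = 1) : -(3 / 2) ≤ ⟪x, y⟫ + ⟪y, z⟫ + ⟪x, z⟫ := by
  have h : ‖x + y + z‖ ^ 2 = 3 + 2 * (⟪x, y⟫ + ⟪y, z⟫ + ⟪x, z⟫) := by
    rw [norm_add_sq_real, norm_add_sq_real, inner_add_left, hx, hy, hz]
    ring
  nlinarith [sq_nonneg ‖x + y + z‖]

end UnitVectors

lemma norm_coe_unitCircle (x : unitCircle) : ‖(x : Plane)‖ = 1 :=
  mem_sphere_zero_iff_norm.1 x.2

lemma exists_norm_le_mem_chordLine_iff {x y : Plane} (hx : ‖x‖ = 1) (hy : ‖y‖ = 1) {r : ℝ}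
    (hr0 : 0 ≤ r) (hr1 : r < 1) :
    (∃ p, ‖p‖ ≤ r ∧ p ∈ chordLine x y) ↔ ⟪x, y⟫ ≤ 2 * r ^ 2 - 1 := by
  by_cases hxy : x = y
  · subst hxy
    rw [chordLine, if_pos rfl, real_inner_self_eq_norm_sq, hx]
    refine iff_of_false ?_ (by nlinarith)
    rintro ⟨p, hpr, hp⟩
    have h := real_inner_le_norm p x
    rw [hx, show ⟪p, x⟫ = 1 from hp] at h
    linarith
  · rw [chordLine, if_neg hxy]
    exact exists_norm_le_mem_affineSpan_pair_iff hx hy hr0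

lemma arcSet_eq_setOf_inner_le {r : ℝ} (hr0 : 0 ≤ r) (hr1 : r < 1) (x : unitCircle) :
    arcSet r x = {y : unitCircle | ⟪(x : Plane), y⟫ ≤ 2 * r ^ 2 - 1} :=
  Set.ext fun y ↦
    exists_norm_le_mem_chordLine_iff (norm_coe_unitCircle x) (norm_coe_unitCircle y) hr0 hr1

lemma lintegral_measure_arcSet_le_half {r : ℝ} (hr0 : 0 ≤ r) (hr1 : r < 1 / 2)
    (μ : Measure unitCircle) [IsProbabilityMeasure μ] :
    ∫⁻ x, μ (arcSet r x) ∂μ ≤ 1 / 2 := by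
  simp_rw [arcSet_eq_setOf_inner_le hr0 (by linarith)]
  refine lintegral_measure_setOf_le_half_of_triangleFree μ
    (isClosed_le (by fun_prop) continuous_const).measurableSet
    (fun x y h ↦ by rwa [real_inner_comm]) fun x y z hxy hyz hxz ↦ ?_
  nlinarith [neg_three_halves_le_inner_add_inner_add_inner (norm_coe_unitCircle x)
    (norm_coe_unitCircle y) (norm_coe_unitCircle z)]

lemma lintegral_measure_arcSet_eq_half_of_antipodal {r : ℝ} (hr0 : 0 ≤ r) (hr1 : r < 1)
    {p q : unitCircle} (hpq : (q : Plane) = -(p : Plane)) :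
    ∫⁻ x, ((2⁻¹ : ℝ≥0∞) • Measure.dirac p + (2⁻¹ : ℝ≥0∞) • Measure.dirac q) (arcSet r x)
      ∂((2⁻¹ : ℝ≥0∞) • Measure.dirac p + (2⁻¹ : ℝ≥0∞) • Measure.dirac q) = 1 / 2 := by
  simp_rw [arcSet_eq_setOf_inner_le hr0 hr1]
  have hp := norm_coe_unitCircle p
  refine lintegral_measure_setOf_eq_half_of_adj ?_ ?_ ?_ ?_ <;>
    simp only [hpq, inner_neg_left, inner_neg_right, real_inner_self_eq_norm_sq, hp] <;>
    nlinarith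

/-- **The one-chord problem for r < 1/2.** For every `r ∈ (0, 1/2)`, the supremum over all
Borel probability measures `μ` on the unit circle of `∫ μ(I_r(x)) dμ(x)` equals `1/2`; in
particular `∫ μ(I_r(x)) dμ(x) ≤ 1/2` for every such `μ`, with equality for
`μ = (1/2)(δ_p + δ_{-p})`, `p ∈ S¹`. -/
theorem one_chord_sup_eq_half (r : ℝ) (hr0 : 0 < r) (hr1 : r < 1 / 2) :
    (⨆ (μ : Measure unitCircle) (_ : IsProbabilityMeasure μ),
        ∫⁻ x, μ (arcSet r x) ∂μ) = 1 / 2 ∧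
    (∀ (μ : Measure unitCircle), IsProbabilityMeasure μ →
        (∫⁻ x, μ (arcSet r x) ∂μ) ≤ 1 / 2) ∧
    (∀ p q : unitCircle, (q : Plane) = -(p : Plane) →
        (∫⁻ x, ((2⁻¹ : ℝ≥0∞) • Measure.dirac p + (2⁻¹ : ℝ≥0∞) • Measure.dirac q) (arcSet r x)
            ∂((2⁻¹ : ℝ≥0∞) • Measure.dirac p + (2⁻¹ : ℝ≥0∞) • Measure.dirac q)) = 1 / 2) := by
  have hbound := fun μ (_ : IsProbabilityMeasure μ) ↦ lintegral_measure_arcSet_le_half hr0.le hr1 μ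
  have hpair := fun (p q : unitCircle) (hpq : (q : Plane) = -(p : Plane)) ↦
    lintegral_measure_arcSet_eq_half_of_antipodal hr0.le (by linarith) hpq
  obtain ⟨e, he⟩ : (Metric.sphere (0 : Plane) 1).Nonempty :=
    NormedSpace.sphere_nonempty.2 zero_le_one
  have hprob : IsProbabilityMeasure ((2⁻¹ : ℝ≥0∞) • Measure.dirac (⟨e, he⟩ : unitCircle) +
      (2⁻¹ : ℝ≥0∞) • Measure.dirac (⟨-e, by simpa [unitCircle] using he⟩ : unitCircle)) :=
    ⟨by simp [ENNReal.inv_two_add_inv_two]⟩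
  exact ⟨le_antisymm (iSup₂_le hbound) (le_iSup₂_of_le _ hprob (hpair _ _ rfl).ge), hbound, hpair⟩

end
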